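/- If u is a smooth solution of the modified Camassa-Holm equation m_t + [m(u² - u_x²)]_x = 0 with m = u - u_xx > 0, then under the reciprocal transformation dy = m dx - m(u² - u_x²) dt, dτ = dt (so ∂_x = m∂_y, ∂_t = ∂_τ - m(u²-u_x²)∂_y) the equation becomes m_τ + 2m³ u_y = 0, and moreover u = m + (1/2) m (1/m)_{τy}. -/

import Mathlib

noncomputable def pd1 (f : ℝ → ℝ → ℝ) : ℝ → ℝ → ℝ := fun x t => deriv (fun x0 => f x0 t) x
noncomputable def pd2 (f : ℝ → ℝ → ℝ) : ℝ → ℝ → ℝ := fun x t => deriv (fun t0 => f x t0) t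
def Smooth2 (f : ℝ → ℝ → ℝ) : Prop := ContDiff ℝ (⊤ : ℕ∞) (fun p : ℝ × ℝ => f p.1 p.2)

private lemma hasDerivAt_pd1 {f : ℝ → ℝ → ℝ} (hf : Smooth2 f) (y τ : ℝ) :
    HasDerivAt (fun x => f x τ) (pd1 f y τ) y := by
  have h : DifferentiableAt ℝ (fun x => f x τ) y := by
    have he : (fun x => f x τ) = (fun p : ℝ × ℝ => f p.1 p.2) ∘ (fun x => (x, τ)) := rfl
    rw [he]
    exact ((hf.differentiable (by simp)).comp
      (differentiable_id.prodMk (differentiable_const τ))).differentiableAt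
  simpa [pd1] using h.hasDerivAt

private lemma hasDerivAt_pd2 {f : ℝ → ℝ → ℝ} (hf : Smooth2 f) (y τ : ℝ) :
    HasDerivAt (fun t => f y t) (pd2 f y τ) τ := by
  have h : DifferentiableAt ℝ (fun t => f y t) τ := by
    have he : (fun t => f y t) = (fun p : ℝ × ℝ => f p.1 p.2) ∘ (fun t => (y, t)) := rfl
    rw [he]
    exact ((hf.differentiable (by simp)).comp
      ((differentiable_const y).prodMk differentiable_id)).differentiableAt
  simpa [pd2] using h.hasDerivAt

private lemma smooth2_pd1 {f : ℝ → ℝ → ℝ} (hf : Smooth2 f) : Smooth2 (pd1 f) := by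
  have h : (fun p : ℝ × ℝ => pd1 f p.1 p.2)
      = fun p => fderiv ℝ (fun q : ℝ × ℝ => f q.1 q.2) p (1, 0) := by
    funext p
    have hF : HasFDerivAt (fun q : ℝ × ℝ => f q.1 q.2)
        (fderiv ℝ (fun q : ℝ × ℝ => f q.1 q.2) p) p :=
      ((hf.differentiable (by simp)) p).hasFDerivAt
    have hline : HasDerivAt (fun x : ℝ => (x, p.2)) ((1 : ℝ), (0 : ℝ)) p.1 :=
      (hasDerivAt_id p.1).prodMk (hasDerivAt_const p.1 p.2)
    have h1 : HasDerivAt ((fun q : ℝ × ℝ => f q.1 q.2) ∘ (fun x : ℝ => (x, p.2)))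
        (fderiv ℝ (fun q : ℝ × ℝ => f q.1 q.2) p ((1 : ℝ), (0 : ℝ))) p.1 :=
      hF.comp_hasDerivAt p.1 hline
    have h2 : HasDerivAt (fun x => f x p.2)
        (fderiv ℝ (fun q : ℝ × ℝ => f q.1 q.2) p (1, 0)) p.1 := h1
    simpa [pd1] using h2.deriv
  show ContDiff ℝ (⊤ : ℕ∞) _
  rw [h]
  exact (hf.fderiv_right (by simp)).clm_apply contDiff_const

/-- in reciprocal variables the modified CH equation becomes the
associated MCH system m_τ + 2m³u_y = 0, u = m + (1/2)m(1/m)_{τy}. -/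
theorem stmt11 (u m E : ℝ → ℝ → ℝ) (hu : Smooth2 u) (hm : Smooth2 m)
    (hmpos : ∀ y τ, 0 < m y τ)
    (hE : E = fun y τ => (u y τ) ^ 2 - (m y τ * pd1 u y τ) ^ 2)
    (hconstraint : ∀ y τ,
      m y τ = u y τ - m y τ * pd1 (fun a b => m a b * pd1 u a b) y τ)
    (hMCH : ∀ y τ,
      (pd2 m y τ - m y τ * E y τ * pd1 m y τ)
        + m y τ * pd1 (fun a b => m a b * E a b) y τ = 0) :
    (∀ y τ, pd2 m y τ + 2 * (m y τ) ^ 3 * pd1 u y τ = 0) ∧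
    (∀ y τ, u y τ =
      m y τ + (1 / 2) * m y τ * pd1 (pd2 (fun a b => 1 / m a b)) y τ) := by
  subst hE
  have hMuy : Smooth2 (fun a b => m a b * pd1 u a b) := hm.mul (smooth2_pd1 hu)
  -- constraint rewritten
  have hP : ∀ y τ, m y τ * pd1 (fun a b => m a b * pd1 u a b) y τ = u y τ - m y τ := by
    intro y τ; have := hconstraint y τ; linarith
  -- part 1
  have part1 : ∀ y τ, pd2 m y τ + 2 * (m y τ) ^ 3 * pd1 u y τ = 0 := by
    intro y τ
    have hm0 := (hmpos y τ).ne'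
    have A := hasDerivAt_pd1 hu y τ
    have B := hasDerivAt_pd1 hMuy y τ
    have B' : HasDerivAt (fun x => m x τ * pd1 u x τ)
        (pd1 (fun a b => m a b * pd1 u a b) y τ) y := B
    have hEd : HasDerivAt (fun x => u x τ ^ 2 - (m x τ * pd1 u x τ) ^ 2)
        (2 * u y τ * pd1 u y τ
          - 2 * (m y τ * pd1 u y τ) * pd1 (fun a b => m a b * pd1 u a b) y τ) y := by
      have := (A.pow 2).sub (B'.pow 2)
      convert this using 1
      · rfl
      · rfl
      · funext x; simp
      · norm_num
    have hMprod := (hasDerivAt_pd1 hm y τ).mul hEd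
    have hpe : pd1 (fun a b => m a b * (u a b ^ 2 - (m a b * pd1 u a b) ^ 2)) y τ
        = pd1 m y τ * (u y τ ^ 2 - (m y τ * pd1 u y τ) ^ 2)
          + m y τ * (2 * u y τ * pd1 u y τ
            - 2 * (m y τ * pd1 u y τ) * pd1 (fun a b => m a b * pd1 u a b) y τ) := by
      simpa [pd1, Pi.mul_def] using hMprod.deriv
    have hM := hMCH y τ
    rw [hpe] at hM
    have hP' := hP y τ
    linear_combination hM + 2 * m y τ ^ 2 * pd1 u y τ * hP'
  refine ⟨part1, ?_⟩
  intro y τ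
  have hinv : ∀ x, pd2 (fun a b => 1 / m a b) x τ = 2 * (m x τ * pd1 u x τ) := by
    intro x
    have hm0 := (hmpos x τ).ne'
    have hd := (hasDerivAt_pd2 hm x τ).inv hm0
    have h2 : pd2 (fun a b => 1 / m a b) x τ = -pd2 m x τ / m x τ ^ 2 := by
      simpa [pd2, one_div, Pi.inv_def] using hd.deriv
    have h3 := part1 x τ
    rw [h2]
    field_simp
    nlinarith [h3]
  have hB := hasDerivAt_pd1 hMuy y τ
  have hB' : HasDerivAt (fun x => 2 * (m x τ * pd1 u x τ))
      (2 * pd1 (fun a b => m a b * pd1 u a b) y τ) y := hB.const_mul 2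
  have hfe : (fun x => pd2 (fun a b => 1 / m a b) x τ)
      = fun x => 2 * (m x τ * pd1 u x τ) := funext hinv
  have hder : pd1 (pd2 (fun a b => 1 / m a b)) y τ
      = 2 * pd1 (fun a b => m a b * pd1 u a b) y τ := by
    have : pd1 (pd2 (fun a b => 1 / m a b)) y τ
        = deriv (fun x => pd2 (fun a b => 1 / m a b) x τ) y := rfl
    rw [this, hfe, hB'.deriv]
  rw [hder]
  have hP' := hP y τ
  have hm0 := (hmpos y τ).ne'
  field_simp at hP' ⊢
  linarith [hP']
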